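/- Suppose that for all real symmetric 3×3 matrices A₁, A₂, A₃, A₄ one has (Σ_{r=1}^4 ‖A_r‖²)² ≥ 2 Σ_{1≤r<s≤4} ‖[A_r,A_s]‖² (the DDVV inequality P(3,4)). Then for every m ≥ 2 and all real symmetric 3×3 matrices A₁, …, A_m one has (Σ_{r=1}^m ‖A_r‖²)² ≥ 2 Σ_{1≤r<s≤m} ‖[A_r,A_s]‖² (the DDVV inequality P(3,m)). -/

import Mathlib

/-!
Identify the symmetric `3 × 3` matrices isometrically with `ℝ⁶` and diagonalise the frame
operator `x ↦ ∑ r, ⟪A r, x⟫ A r` in an orthonormal eigenbasis `v i` with eigenvalues `μ i ≥ 0`.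
Writing `w i j = ‖[v i, v j]‖²`, both sides of `P(3,m)` become quadratic in `μ`:
`∑ r, ‖A r‖² = ∑ i, μ i` and `∑ r s, ‖[A r, A s]‖² = ∑ i j, μ i μ j w i j`.
`P(3,4)` applied to `(v i, v j, 0, 0)` gives `w i j ≤ 2`, and
`∑ j, w i j = 3 ‖v i‖² - (tr v i)² ≤ 3`, since this sum does not depend on the orthonormal
basis and can be computed in the standard one.
Finally, for a symmetric matrix `w ≥ 0` with zero diagonal, entries `≤ 2` and row sums `≤ 3`,
the positive parts of `w i j - 1` have row sums `≤ 1`, which bounds `∑ μ i μ j w i j` by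
`(∑ μ i)²`.
-/

open Matrix BigOperators

/-- Frobenius norm squared of a real `3 × 3` matrix: the sum of the squares of all entries. -/
noncomputable def frobSq (A : Matrix (Fin 3) (Fin 3) ℝ) : ℝ :=
  ∑ i, ∑ j, (A i j) ^ 2

/-- The commutator `[A, B] = A * B - B * A`. -/
def mcomm (A B : Matrix (Fin 3) (Fin 3) ℝ) : Matrix (Fin 3) (Fin 3) ℝ :=
  A * B - B * A

open scoped RealInnerProductSpace Kronecker

theorem sum_bilin_sum_smul_self {R M κ ι : Type*} [CommSemiring R] [AddCommMonoid M] [Module R M]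
    [Fintype κ] [Fintype ι] [DecidableEq ι] (β : LinearMap.BilinForm R M) {c : Matrix κ ι R}
    {μ : ι → R} (hc : cᵀ * c = diagonal μ) (y : ι → M) :
    ∑ r, β (∑ i, c r i • y i) (∑ i, c r i • y i) = ∑ i, μ i * β (y i) (y i) := by
  have hcol : ∀ i j, ∑ r, c r i * c r j = if i = j then μ i else 0 := fun i j => by
    simpa [Matrix.mul_apply, diagonal_apply] using congrFun (congrFun hc i) j
  have hrow : ∀ j, ∑ r, ∑ i, c r j * (c r i * β (y i) (y j)) = μ j * β (y j) (y j) := by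
    intro j
    rw [Finset.sum_comm]
    simp only [← mul_assoc, ← Finset.sum_mul, hcol]
    simp
  simp only [map_sum, map_smul, LinearMap.sum_apply, LinearMap.smul_apply, smul_eq_mul,
    Finset.mul_sum]
  rw [Finset.sum_comm]
  exact Finset.sum_congr rfl fun j _ => hrow j

theorem kronecker_transpose_mul_kronecker_eq_diagonal {R κ ι : Type*} [CommSemiring R]
    [Fintype κ] [DecidableEq ι]
    {c : Matrix κ ι R} {μ : ι → R} (hc : cᵀ * c = diagonal μ) :
    (c ⊗ₖ c)ᵀ * (c ⊗ₖ c) = diagonal fun p => μ p.1 * μ p.2 := by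
  rw [← kroneckerMap_transpose, ← mul_kronecker_mul, hc, diagonal_kronecker_diagonal]

theorem sum_sum_bilin_sum_smul_self {R M N κ ι : Type*} [CommSemiring R] [AddCommMonoid M]
    [Module R M] [AddCommMonoid N] [Module R N] [Fintype κ] [Fintype ι] [DecidableEq ι]
    (K : M →ₗ[R] M →ₗ[R] N) (β : LinearMap.BilinForm R N) {c : Matrix κ ι R}
    {μ : ι → R} (hc : cᵀ * c = diagonal μ) (y : ι → M) :
    ∑ r, ∑ s,
        β (K (∑ i, c r i • y i) (∑ i, c s i • y i)) (K (∑ i, c r i • y i) (∑ i, c s i • y i)) =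
      ∑ i, ∑ j, μ i * μ j * β (K (y i) (y j)) (K (y i) (y j)) := by
  have hK : ∀ r s, K (∑ i, c r i • y i) (∑ i, c s i • y i)
      = ∑ p : ι × ι, (c ⊗ₖ c) (r, s) p • K (y p.1) (y p.2) := fun r s => by
    simp only [map_sum, map_smul, LinearMap.sum_apply, LinearMap.smul_apply, Finset.smul_sum,
      smul_smul, mul_comm, kroneckerMap_apply, Fintype.sum_prod_type]
    exact Finset.sum_comm
  simp only [hK]
  rw [← Fintype.sum_prod_type',
    sum_bilin_sum_smul_self β (kronecker_transpose_mul_kronecker_eq_diagonal hc),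
    Fintype.sum_prod_type]

theorem two_mul_sum_sum_ite_lt {R ι : Type*} [NonAssocSemiring R] [Fintype ι] [LinearOrder ι]
    (f : ι → ι → R) (hsymm : ∀ r s, f r s = f s r) (hdiag : ∀ r, f r r = 0) :
    2 * ∑ r, ∑ s, (if r < s then f r s else 0) = ∑ r, ∑ s, f r s := by
  have hsplit : ∀ r s, f r s = (if r < s then f r s else 0) + if s < r then f s r else 0 := by
    intro r s
    rcases lt_trichotomy r s with h | rfl | h
    · simp [h, h.not_gt]
    · simp [hdiag]
    · simp [h, h.not_gt, hsymm r s]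
  rw [Finset.sum_congr rfl fun r _ => Finset.sum_congr rfl fun s _ => hsplit r s]
  simp only [Finset.sum_add_distrib]
  rw [Finset.sum_comm (f := fun r s => if s < r then f s r else 0), two_mul]

theorem exists_orthonormalBasis_transpose_mul_self_eq_diagonal {E κ : Type*}
    [NormedAddCommGroup E] [InnerProductSpace ℝ E] [FiniteDimensional ℝ E] [Fintype κ] {n : ℕ}
    (hn : Module.finrank ℝ E = n) (x : κ → E) :
    ∃ (b : OrthonormalBasis (Fin n) ℝ E) (μ : Fin n → ℝ),
      (of fun r i => ⟪b i, x r⟫)ᵀ * (of fun r i => ⟪b i, x r⟫) = diagonal μ := by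
  let T : E →ₗ[ℝ] E := ∑ r, (InnerProductSpace.rankOne ℝ (x r) (x r) : E →L[ℝ] E)
  have hT_inner : ∀ u w, ⟪T u, w⟫ = ∑ r, ⟪u, x r⟫ * ⟪w, x r⟫ := fun u w => by
    simp [T, sum_inner, real_inner_smul_left, real_inner_comm (x _)]
  have hT : T.IsSymmetric := fun u w => by
    rw [hT_inner, real_inner_comm, hT_inner]
    simp only [mul_comm]
  refine ⟨hT.eigenvectorBasis hn, hT.eigenvalues hn, ?_⟩
  ext i j
  rw [Matrix.mul_apply, diagonal_apply]
  simp only [transpose_apply, of_apply]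
  rw [← hT_inner, hT.apply_eigenvectorBasis, real_inner_smul_left,
    orthonormal_iff_ite.mp (hT.eigenvectorBasis hn).orthonormal]
  simp

theorem OrthonormalBasis.sum_bilin_self_eq {E ι ι' : Type*} [NormedAddCommGroup E]
    [InnerProductSpace ℝ E] [Fintype ι] [Fintype ι'] [DecidableEq ι'] (b : OrthonormalBasis ι ℝ E)
    (b' : OrthonormalBasis ι' ℝ E) (β : LinearMap.BilinForm ℝ E) :
    ∑ j, β (b j) (b j) = ∑ α, β (b' α) (b' α) := by
  have hc : (of fun j α => ⟪b' α, b j⟫)ᵀ * (of fun j α => ⟪b' α, b j⟫) = diagonal fun _ => 1 := by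
    ext α γ
    simp only [Matrix.mul_apply, transpose_apply, of_apply, diagonal_apply]
    simp only [real_inner_comm _ (b' γ), b.sum_inner_mul_inner,
      orthonormal_iff_ite.mp b'.orthonormal α γ]
  have := sum_bilin_sum_smul_self β hc b'
  simp only [of_apply, b'.sum_repr', one_mul] at this
  exact this


-- If `k` of the `f j` exceed `1`, their total excess is at most `min k (3 - k) ≤ 1`.
theorem sum_max_sub_one_le_one {κ : Type*} [Fintype κ] (f : κ → ℝ) (h0 : ∀ j, 0 ≤ f j)
    (h2 : ∀ j, f j ≤ 2) (h3 : ∑ j, f j ≤ 3) : ∑ j, max (f j - 1) 0 ≤ 1 := by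
  classical
  set t := Finset.univ.filter fun j => 1 < f j
  have hsum : ∑ j, max (f j - 1) 0 = ∑ j ∈ t, f j - t.card := by
    have hpt : ∀ j, max (f j - 1) 0 = if 1 < f j then f j - 1 else 0 := fun j => by
      split_ifs with h
      · exact max_eq_left (by linarith)
      · exact max_eq_right (by linarith)
    simp only [hpt, ← Finset.sum_filter, Finset.sum_sub_distrib, Finset.sum_const, nsmul_one, t]
  have hle_card : ∑ j ∈ t, f j ≤ 2 * t.card := by
    simpa [mul_comm] using Finset.sum_le_card_nsmul t f 2 fun j _ => h2 j
  have hle_three : ∑ j ∈ t, f j ≤ 3 :=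
    (Finset.sum_le_sum_of_subset_of_nonneg (Finset.subset_univ t) fun j _ _ => h0 j).trans h3
  rw [hsum]
  rcases Nat.lt_or_ge t.card 2 with h | h
  · have : (t.card : ℝ) ≤ 1 := by exact_mod_cast Nat.lt_succ_iff.mp h
    linarith
  · have : (2 : ℝ) ≤ t.card := by exact_mod_cast h
    linarith

theorem sum_sum_mul_mul_le_sq_sum {ι : Type*} [Fintype ι] (μ : ι → ℝ) (w : ι → ι → ℝ)
    (hμ : ∀ i, 0 ≤ μ i) (hsymm : ∀ i j, w i j = w j i) (hdiag : ∀ i, w i i = 0)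
    (h0 : ∀ i j, 0 ≤ w i j) (h2 : ∀ i j, w i j ≤ 2) (h3 : ∀ i, ∑ j, w i j ≤ 3) :
    ∑ i, ∑ j, μ i * μ j * w i j ≤ (∑ i, μ i) ^ 2 := by
  classical
  set d : ι → ι → ℝ := fun i j => max (w i j - 1) 0
  have hd : ∀ i, ∑ j, d i j ≤ 1 := fun i => sum_max_sub_one_le_one _ (h0 i) (h2 i) (h3 i)
  have hpt : ∀ i j, μ i * μ j * w i j ≤
      μ i * μ j - (if i = j then μ i ^ 2 else 0) + (d i j * μ i ^ 2 + d j i * μ j ^ 2) / 2 := by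
    intro i j
    have hd0 : 0 ≤ d i j := le_max_right _ _
    by_cases h : i = j
    · subst h
      simp only [hdiag, if_true]
      nlinarith [sq_nonneg (μ i)]
    · have hw : w i j ≤ 1 + d i j := by linarith [le_max_left (w i j - 1) 0]
      have hdji : d j i = d i j := by simp only [d, hsymm j i]
      rw [if_neg h, hdji]
      nlinarith [sq_nonneg (μ i - μ j), mul_nonneg (hμ i) (hμ j)]
  have hdμ : ∑ i, ∑ j, d i j * μ i ^ 2 ≤ ∑ i, μ i ^ 2 := by
    refine Finset.sum_le_sum fun i _ => ?_
    rw [← Finset.sum_mul]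
    exact mul_le_of_le_one_left (sq_nonneg _) (hd i)
  calc ∑ i, ∑ j, μ i * μ j * w i j
      ≤ ∑ i, ∑ j, (μ i * μ j - (if i = j then μ i ^ 2 else 0)
          + (d i j * μ i ^ 2 + d j i * μ j ^ 2) / 2) :=
        Finset.sum_le_sum fun i _ => Finset.sum_le_sum fun j _ => hpt i j
    _ = (∑ i, μ i) ^ 2 - ∑ i, μ i ^ 2 + ∑ i, ∑ j, d i j * μ i ^ 2 := by
        simp only [Finset.sum_add_distrib, Finset.sum_sub_distrib, ← Finset.sum_div,
          Finset.sum_ite_eq, Finset.mem_univ, if_true, sq, Finset.sum_mul_sum]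
        rw [Finset.sum_comm (f := fun i j => d j i * (μ j * μ j))]
        ring
    _ ≤ (∑ i, μ i) ^ 2 := by linarith

noncomputable def frobForm {m n : Type*} [Fintype m] [Fintype n] :
    LinearMap.BilinForm ℝ (Matrix m n ℝ) :=
  LinearMap.mk₂ ℝ (fun A B => ∑ i, ∑ j, A i j * B i j)
    (fun A A' B => by simp [add_mul, Finset.sum_add_distrib])
    (fun c A B => by simp [Finset.mul_sum, mul_assoc])
    (fun A B B' => by simp [mul_add, Finset.sum_add_distrib])
    (fun c A B => by simp [Finset.mul_sum, mul_left_comm])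

theorem frobForm_self (A : Matrix (Fin 3) (Fin 3) ℝ) : frobForm A A = frobSq A := by
  simp [frobForm, frobSq, sq]

def mcommBilin :
    Matrix (Fin 3) (Fin 3) ℝ →ₗ[ℝ] Matrix (Fin 3) (Fin 3) ℝ →ₗ[ℝ] Matrix (Fin 3) (Fin 3) ℝ :=
  LinearMap.mul ℝ _ - (LinearMap.mul ℝ _).flip

theorem mcommBilin_apply (A B : Matrix (Fin 3) (Fin 3) ℝ) : mcommBilin A B = mcomm A B := rfl

theorem frobSq_nonneg (A : Matrix (Fin 3) (Fin 3) ℝ) : 0 ≤ frobSq A := by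
  unfold frobSq; positivity

theorem frobSq_mcomm_comm (A B : Matrix (Fin 3) (Fin 3) ℝ) :
    frobSq (mcomm B A) = frobSq (mcomm A B) := by
  simp only [frobSq, mcomm, Matrix.sub_apply, ← neg_sub ((A * B) _ _), neg_sq]

theorem frobSq_mcomm_self (A : Matrix (Fin 3) (Fin 3) ℝ) : frobSq (mcomm A A) = 0 := by
  simp [frobSq, mcomm]

-- The factors `1 / √2` make this an isometry onto the symmetric matrices with the Frobenius norm.
noncomputable def ofSymCoords : EuclideanSpace ℝ (Fin 6) →ₗ[ℝ] Matrix (Fin 3) (Fin 3) ℝ where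
  toFun x := !![x 0, x 3 / √2, x 4 / √2; x 3 / √2, x 1, x 5 / √2; x 4 / √2, x 5 / √2, x 2]
  map_add' x y := by ext i j; fin_cases i <;> fin_cases j <;> simp [add_div]
  map_smul' c x := by ext i j; fin_cases i <;> fin_cases j <;> simp [mul_div_assoc]

theorem isSymm_ofSymCoords (x : EuclideanSpace ℝ (Fin 6)) : (ofSymCoords x).IsSymm := by
  ext i j; fin_cases i <;> fin_cases j <;> simp [ofSymCoords]

theorem frobSq_ofSymCoords (x : EuclideanSpace ℝ (Fin 6)) : frobSq (ofSymCoords x) = ‖x‖ ^ 2 := by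
  rw [EuclideanSpace.real_norm_sq_eq]
  simp only [frobSq, ofSymCoords, LinearMap.coe_mk, AddHom.coe_mk, of_apply, cons_val',
    cons_val_fin_one, Fin.sum_univ_succ, cons_val_zero, cons_val_succ, Finset.univ_unique,
    Fin.default_eq_zero, Finset.sum_const, Finset.card_singleton, one_smul, div_pow,
    Real.sq_sqrt zero_le_two, Fin.succ_zero_eq_one, Fin.succ_one_eq_two, Fin.reduceSucc,
    Finset.sum_singleton]
  ring

theorem exists_ofSymCoords_eq {A : Matrix (Fin 3) (Fin 3) ℝ} (hA : A.IsSymm) :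
    ∃ x, ofSymCoords x = A := by
  refine ⟨WithLp.toLp 2 ![A 0 0, A 1 1, A 2 2, √2 * A 0 1, √2 * A 0 2, √2 * A 1 2], ?_⟩
  ext i j
  fin_cases i <;> fin_cases j <;> simp [ofSymCoords, hA.apply 1 0, hA.apply 2 0, hA.apply 2 1]

theorem sum_frobSq_mcomm_ofSymCoords_single {X : Matrix (Fin 3) (Fin 3) ℝ} (hX : X.IsSymm) :
    ∑ α, frobSq (mcomm X (ofSymCoords (EuclideanSpace.single α 1))) =
      3 * frobSq X - X.trace ^ 2 := by
  have h10 : X 1 0 = X 0 1 := hX.apply 0 1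
  have h20 : X 2 0 = X 0 2 := hX.apply 0 2
  have h21 : X 2 1 = X 1 2 := hX.apply 1 2
  have hs : (√2)⁻¹ ^ 2 = 1 / 2 := by rw [inv_pow, Real.sq_sqrt zero_le_two, one_div]
  simp only [Fin.sum_univ_succ, Fin.sum_univ_zero, frobSq, mcomm, Matrix.sub_apply,
    Matrix.mul_apply, trace, diag]
  simp only [ofSymCoords, LinearMap.coe_mk, AddHom.coe_mk, PiLp.single_eq_same, ne_eq,
    Fin.reduceEq, not_false_eq_true, PiLp.single_eq_of_ne, zero_div, one_ne_zero, of_apply,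
    cons_val', cons_val_zero, cons_val_fin_one, mul_one, Fin.succ_zero_eq_one, cons_val_one,
    mul_zero, Fin.succ_one_eq_two, cons_val, add_zero, one_mul, h10, zero_mul, h20, sub_self,
    OfNat.ofNat_ne_zero, zero_pow, h21, zero_sub, even_two, Even.neg_pow, zero_add, sub_zero,
    zero_ne_one, Fin.reduceSucc, one_div]
  ring_nf
  rw [hs]
  ring

theorem sum_frobSq_mcomm_ofSymCoords_le {ι : Type*} [Fintype ι]
    (b : OrthonormalBasis ι ℝ (EuclideanSpace ℝ (Fin 6))) {X : Matrix (Fin 3) (Fin 3) ℝ}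
    (hX : X.IsSymm) : ∑ j, frobSq (mcomm X (ofSymCoords (b j))) ≤ 3 * frobSq X := by
  have h := b.sum_bilin_self_eq (EuclideanSpace.basisFun (Fin 6) ℝ)
    (frobForm.compl₁₂ (mcommBilin X ∘ₗ ofSymCoords) (mcommBilin X ∘ₗ ofSymCoords))
  simp only [LinearMap.compl₁₂_apply, LinearMap.comp_apply, mcommBilin_apply, frobForm_self,
    EuclideanSpace.basisFun_apply] at h
  rw [h, sum_frobSq_mcomm_ofSymCoords_single hX]
  linarith [sq_nonneg X.trace]

-- The inequality `P(3,m)`.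
def DDVV3 (m : ℕ) : Prop :=
  ∀ A : Fin m → Matrix (Fin 3) (Fin 3) ℝ, (∀ r, (A r).IsSymm) →
    (∑ r, frobSq (A r)) ^ 2 ≥ 2 * ∑ r, ∑ s, (if r < s then frobSq (mcomm (A r) (A s)) else 0)

theorem frobSq_mcomm_le_of_ddvv3_four (h : DDVV3 4) {X Y : Matrix (Fin 3) (Fin 3) ℝ}
    (hX : X.IsSymm) (hY : Y.IsSymm) : 2 * frobSq (mcomm X Y) ≤ (frobSq X + frobSq Y) ^ 2 := by
  have hsymm : ∀ r, (![X, Y, 0, 0] r).IsSymm := by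
    intro r; fin_cases r
    exacts [hX, hY, isSymm_zero, isSymm_zero]
  have hfrobSq_zero : frobSq 0 = 0 := by simp [frobSq]
  have hmcomm_zero : ∀ A, mcomm A 0 = 0 := by simp [mcomm]
  simpa [Fin.sum_univ_four, hfrobSq_zero, hmcomm_zero] using h ![X, Y, 0, 0] hsymm

theorem ddvv3_of_frobSq_mcomm_le
    (h : ∀ X Y : Matrix (Fin 3) (Fin 3) ℝ, X.IsSymm → Y.IsSymm →
      2 * frobSq (mcomm X Y) ≤ (frobSq X + frobSq Y) ^ 2) (m : ℕ) : DDVV3 m := by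
  intro A hA
  rw [ge_iff_le, two_mul_sum_sum_ite_lt _ (fun r s => (frobSq_mcomm_comm _ _).symm)
    (fun r => frobSq_mcomm_self _)]
  choose x hx using fun r => exists_ofSymCoords_eq (hA r)
  obtain ⟨b, μ, hc⟩ := exists_orthonormalBasis_transpose_mul_self_eq_diagonal
    finrank_euclideanSpace_fin x
  obtain rfl : A = fun r => ∑ i, ⟪b i, x r⟫ • ofSymCoords (b i) := by
    ext1 r
    rw [← hx r]
    conv_lhs => rw [← b.sum_repr' (x r)]
    simp [map_sum, map_smul]
  have hμ : ∀ i, 0 ≤ μ i := by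
    have := posSemidef_conjTranspose_mul_self (of fun r i => ⟪b i, x r⟫)
    rwa [conjTranspose_eq_transpose_of_trivial, hc, posSemidef_diagonal_iff] at this
  have hb : ∀ i, frobSq (ofSymCoords (b i)) = 1 := fun i => by
    simp [frobSq_ofSymCoords, b.orthonormal.1 i]
  have hsum := sum_bilin_sum_smul_self frobForm hc fun i => ofSymCoords (b i)
  have hsum_comm := sum_sum_bilin_sum_smul_self mcommBilin frobForm hc fun i => ofSymCoords (b i)
  simp only [of_apply, frobForm_self, mcommBilin_apply, hb, mul_one] at hsum hsum_comm
  rw [hsum, hsum_comm]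
  refine sum_sum_mul_mul_le_sq_sum μ _ hμ (fun i j => (frobSq_mcomm_comm _ _).symm)
    (fun i => frobSq_mcomm_self _) (fun i j => frobSq_nonneg _) (fun i j => ?_) (fun i => ?_)
  · have := h _ _ (isSymm_ofSymCoords (b i)) (isSymm_ofSymCoords (b j))
    rw [hb, hb] at this
    linarith
  · simpa [hb] using sum_frobSq_mcomm_ofSymCoords_le b (isSymm_ofSymCoords (b i))

/-- If `P(3,4)` holds, then `P(3,m)` holds for every `m ≥ 2`. -/
theorem ddvv_P_3_4_implies_P_3_m
    (hP : ∀ A : Fin 4 → Matrix (Fin 3) (Fin 3) ℝ, (∀ r, (A r).IsSymm) →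
      (∑ r, frobSq (A r)) ^ 2 ≥
        2 * ∑ r, ∑ s, (if r < s then frobSq (mcomm (A r) (A s)) else 0)) :
    ∀ m : ℕ, 2 ≤ m → ∀ A : Fin m → Matrix (Fin 3) (Fin 3) ℝ, (∀ r, (A r).IsSymm) →
      (∑ r, frobSq (A r)) ^ 2 ≥
        2 * ∑ r, ∑ s, (if r < s then frobSq (mcomm (A r) (A s)) else 0) :=
  fun m _ => ddvv3_of_frobSq_mcomm_le (fun _ _ => frobSq_mcomm_le_of_ddvv3_four hP) m
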